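/- arXiv:1401.5783 — 2 statements merged into one kernel-verified Lean document; each statement's English description precedes it below -/
import Mathlib

section
/- For all real numbers α, β, δ > 0 with α − βδ = −1, for every ξ ∈ ℝ^d, ∫₀¹ t^α / (t^δ + ⟨ξ⟩^{−2})^β dt ≤ 1/(α+1) + log(⟨ξ⟩^{2β/(α+1)}). -/
/-!
Split `[0, 1]` at `c = A ^ δ⁻¹`, where `t ^ δ = A`, with `A = ⟨ξ⟩ ^ (-2)`. On `[0, c]` drop `t ^ δ`
from the denominator: `∫₀ᶜ t ^ α / A ^ β = c ^ (α + 1) / ((α + 1) A ^ β) = 1 / (α + 1)` because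
`c ^ (α + 1) = A ^ β`. On `[c, 1]` drop `A`: since `β δ = α + 1` the integrand is at most `t⁻¹`,
whose integral is `-log c = -log A / δ = log ⟨ξ⟩ ^ (2 / δ)`.
-/

open MeasureTheory Set Real

theorem IntervalIntegrable.of_nonneg_of_le {f g : ℝ → ℝ} {a b : ℝ} (hab : a ≤ b)
    (hg : IntervalIntegrable g volume a b) (hf : Measurable f)
    (hf0 : ∀ t ∈ Icc a b, 0 ≤ f t) (hfg : ∀ t ∈ Icc a b, f t ≤ g t) :
    IntervalIntegrable f volume a b := by
  refine hg.mono_fun hf.aestronglyMeasurable ?_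
  rw [uIoc_of_le hab]
  filter_upwards [ae_restrict_mem measurableSet_Ioc] with t ht
  have ht' := Ioc_subset_Icc_self ht
  rw [norm_of_nonneg (hf0 t ht'), norm_of_nonneg ((hf0 t ht').trans (hfg t ht'))]
  exact hfg t ht'

section

variable {α β δ A t : ℝ}

theorem rpow_div_add_rpow_le_rpow_div (ht : 0 ≤ t) (hA : 0 < A) (hβ : 0 ≤ β) :
    t ^ α / (t ^ δ + A) ^ β ≤ t ^ α / A ^ β :=
  div_le_div_of_nonneg_left (rpow_nonneg ht α) (rpow_pos_of_pos hA β)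
    (rpow_le_rpow hA.le (le_add_of_nonneg_left (rpow_nonneg ht δ)) hβ)

theorem rpow_div_add_rpow_le_inv (ht : 0 < t) (hA : 0 ≤ A) (hβ : 0 ≤ β)
    (h : β * δ = α + 1) : t ^ α / (t ^ δ + A) ^ β ≤ t⁻¹ := by
  have hpow : t ^ (α + 1) ≤ (t ^ δ + A) ^ β := by
    rw [← h, mul_comm, rpow_mul ht.le]
    exact rpow_le_rpow (rpow_nonneg ht.le δ) (le_add_of_nonneg_right hA) hβ
  calc t ^ α / (t ^ δ + A) ^ β ≤ t ^ α / t ^ (α + 1) :=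
        div_le_div_of_nonneg_left (rpow_nonneg ht.le α) (rpow_pos_of_pos ht _) hpow
    _ = t⁻¹ := by rw [← rpow_sub ht, sub_add_cancel_left, rpow_neg_one]

theorem intervalIntegrable_rpow_div_add_rpow (hα : -1 < α) (hA : 0 < A) (hβ : 0 ≤ β)
    {a b : ℝ} (ha : 0 ≤ a) (hab : a ≤ b) :
    IntervalIntegrable (fun t ↦ t ^ α / (t ^ δ + A) ^ β) volume a b :=
  .of_nonneg_of_le hab ((intervalIntegral.intervalIntegrable_rpow' hα).div_const _)
    (by fun_prop)
    (fun t ht ↦ by have := ha.trans ht.1; positivity)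
    (fun t ht ↦ rpow_div_add_rpow_le_rpow_div (ha.trans ht.1) hA hβ)

theorem integral_rpow_div_add_rpow_le_one_div (hA : 0 < A) (hβ : 0 < β) (hδ : 0 < δ)
    (h : β * δ = α + 1) :
    ∫ t in (0 : ℝ)..A ^ δ⁻¹, t ^ α / (t ^ δ + A) ^ β ≤ 1 / (α + 1) := by
  have hα : 0 < α + 1 := h ▸ mul_pos hβ hδ
  have hc : 0 ≤ A ^ δ⁻¹ := rpow_nonneg hA.le _
  have hroot : (A ^ δ⁻¹) ^ (α + 1) = A ^ β := by
    rw [← rpow_mul hA.le, ← h, mul_comm β, inv_mul_cancel_left₀ hδ.ne']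
  calc ∫ t in (0 : ℝ)..A ^ δ⁻¹, t ^ α / (t ^ δ + A) ^ β
      ≤ ∫ t in (0 : ℝ)..A ^ δ⁻¹, t ^ α / A ^ β :=
        intervalIntegral.integral_mono_on hc
          (intervalIntegrable_rpow_div_add_rpow (by linarith) hA hβ.le le_rfl hc)
          ((intervalIntegral.intervalIntegrable_rpow' (by linarith)).div_const _)
          (fun t ht ↦ rpow_div_add_rpow_le_rpow_div ht.1 hA hβ.le)
    _ = 1 / (α + 1) := by
        rw [intervalIntegral.integral_div, integral_rpow (.inl (by linarith)), hroot,
          zero_rpow hα.ne', sub_zero]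
        field_simp [(rpow_pos_of_pos hA β).ne']

theorem integral_rpow_div_add_rpow_le_neg_log_div (hA : 0 < A) (hA1 : A ≤ 1) (hβ : 0 < β)
    (hδ : 0 < δ) (h : β * δ = α + 1) :
    ∫ t in A ^ δ⁻¹..(1 : ℝ), t ^ α / (t ^ δ + A) ^ β ≤ -log A / δ := by
  have hc : 0 < A ^ δ⁻¹ := rpow_pos_of_pos hA _
  have hc1 : A ^ δ⁻¹ ≤ 1 := rpow_le_one hA.le hA1 (by positivity)
  calc ∫ t in A ^ δ⁻¹..(1 : ℝ), t ^ α / (t ^ δ + A) ^ β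
      ≤ ∫ t in A ^ δ⁻¹..(1 : ℝ), t⁻¹ :=
        intervalIntegral.integral_mono_on hc1
          (intervalIntegrable_rpow_div_add_rpow (by nlinarith) hA hβ.le hc.le hc1)
          (intervalIntegral.intervalIntegrable_inv (fun t ht ↦ by
            rw [uIcc_of_le hc1] at ht; exact (hc.trans_le ht.1).ne') continuousOn_id)
          (fun t ht ↦ rpow_div_add_rpow_le_inv (hc.trans_le ht.1) hA.le hβ.le h)
    _ = -log A / δ := by
        rw [integral_inv (by rw [uIcc_of_le hc1]; exact fun h0 ↦ hc.not_ge h0.1), one_div,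
          log_inv, log_rpow hA]
        ring

theorem integral_rpow_div_add_rpow_le (hA : 0 < A) (hA1 : A ≤ 1) (hβ : 0 < β) (hδ : 0 < δ)
    (h : β * δ = α + 1) :
    ∫ t in (0 : ℝ)..1, t ^ α / (t ^ δ + A) ^ β ≤ 1 / (α + 1) - log A / δ := by
  have hα : -1 < α := by nlinarith
  have hc : 0 < A ^ δ⁻¹ := rpow_pos_of_pos hA _
  have hc1 : A ^ δ⁻¹ ≤ 1 := rpow_le_one hA.le hA1 (by positivity)
  rw [← intervalIntegral.integral_add_adjacent_intervals
    (intervalIntegrable_rpow_div_add_rpow hα hA hβ.le le_rfl hc.le)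
    (intervalIntegrable_rpow_div_add_rpow hα hA hβ.le hc.le hc1), sub_eq_add_neg, ← neg_div]
  exact add_le_add (integral_rpow_div_add_rpow_le_one_div hA hβ hδ h)
    (integral_rpow_div_add_rpow_le_neg_log_div hA hA1 hβ hδ h)

end

theorem stmt_1_general (d : ℕ) (α β δ : ℝ) (hβ : 0 < β) (hδ : 0 < δ)
    (h : α - β * δ = -1) :
    ∀ ξ : EuclideanSpace ℝ (Fin d),
      ∫ t in (0:ℝ)..1, t ^ α / (t ^ δ + (Real.sqrt (1 + ‖ξ‖ ^ 2)) ^ (-2 : ℝ)) ^ β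
        ≤ 1 / (α + 1) + Real.log ((Real.sqrt (1 + ‖ξ‖ ^ 2)) ^ (2 * β / (α + 1))) := by
  intro ξ
  set s := √(1 + ‖ξ‖ ^ 2)
  have hs : 1 ≤ s := one_le_sqrt.mpr (by nlinarith [sq_nonneg ‖ξ‖])
  have hβδ : β * δ = α + 1 := by linarith
  refine (integral_rpow_div_add_rpow_le (rpow_pos_of_pos (by positivity) _)
    (rpow_le_one_of_one_le_of_nonpos hs (by norm_num)) hβ hδ hβδ).trans_eq ?_
  rw [log_rpow (by positivity), log_rpow (by positivity), ← hβδ]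
  field_simp
  ring

/-- Lemma 4.1 (case α − βδ = −1): logarithmic bound for the integral
∫₀¹ t^α / (t^δ + ⟨ξ⟩^{−2})^β dt, where ⟨ξ⟩ = √(1+|ξ|²). -/
theorem stmt_1 (d : ℕ) (α β δ : ℝ) (hα : 0 < α) (hβ : 0 < β) (hδ : 0 < δ)
    (h : α - β * δ = -1) :
    ∀ ξ : EuclideanSpace ℝ (Fin d),
      ∫ t in (0:ℝ)..1, t ^ α / (t ^ δ + (Real.sqrt (1 + ‖ξ‖ ^ 2)) ^ (-2 : ℝ)) ^ β
        ≤ 1 / (α + 1) + Real.log ((Real.sqrt (1 + ‖ξ‖ ^ 2)) ^ (2 * β / (α + 1))) :=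
  stmt_1_general d α β δ hβ hδ h
end

section
/- For every integer k ≥ 2 and ρ = 1/2 − 1/k, there exists a constant C such that for all ξ ∈ ℝ, ∫₀¹ t^{kρ} |ξ| / sqrt(1 + t^k ⟨ξ⟩²) dt ≤ C · log(1 + ⟨ξ⟩). -/
/-! Split `[0, 1]` at `t₀ = ⟨ξ⟩ ^ (-2 / k)`, where `t ^ k ⟨ξ⟩² = 1` and `k ρ = k / 2 - 1`.
Below `t₀` the denominator is at least `1`, so the integrand is at most `t ^ (k / 2 - 1) ⟨ξ⟩`,
whose integral over `[0, t₀]` is `2 / k`. Above `t₀` the denominator is at least `t ^ (k / 2) ⟨ξ⟩`,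
so the integrand is at most `1 / t`, whose integral over `[t₀, 1]` is `(2 / k) log ⟨ξ⟩`.
Hence the integral is at most `1 + log ⟨ξ⟩ ≤ (1 / log 2 + 1) log (1 + ⟨ξ⟩)`. -/

open MeasureTheory Real Set intervalIntegral

lemma one_le_sqrt_one_add_sq (ξ : ℝ) : 1 ≤ √(1 + ξ ^ 2) :=
  one_le_sqrt.mpr (by nlinarith [sq_nonneg ξ])

section Integrand

variable {k t : ℝ}

lemma rpow_mul_abs_div_sqrt_le (c ξ : ℝ) (ht : 0 ≤ t) :
    t ^ c * |ξ| / √(1 + t ^ k * (1 + ξ ^ 2)) ≤ t ^ c * √(1 + ξ ^ 2) := by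
  have hD : 1 ≤ √(1 + t ^ k * (1 + ξ ^ 2)) :=
    one_le_sqrt.mpr (by nlinarith [rpow_nonneg ht k, sq_nonneg ξ])
  calc t ^ c * |ξ| / √(1 + t ^ k * (1 + ξ ^ 2)) ≤ t ^ c * |ξ| :=
        div_le_self (by positivity) hD
    _ ≤ t ^ c * √(1 + ξ ^ 2) :=
        mul_le_mul_of_nonneg_left (abs_le_sqrt (le_add_of_nonneg_left zero_le_one))
          (rpow_nonneg ht c)

lemma rpow_half_sub_one_mul_abs_div_sqrt_le_inv (ξ : ℝ) (ht : 0 < t) :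
    t ^ (k / 2 - 1) * |ξ| / √(1 + t ^ k * (1 + ξ ^ 2)) ≤ t⁻¹ := by
  have hnum : t ^ (k / 2) * |ξ| ≤ √(1 + t ^ k * (1 + ξ ^ 2)) := by
    have hsqrt : t ^ (k / 2) = √(t ^ k) := by
      rw [sqrt_eq_rpow, ← rpow_mul ht.le, mul_one_div]
    calc t ^ (k / 2) * |ξ| ≤ √(t ^ k) * √(1 + ξ ^ 2) := by
          rw [hsqrt]
          exact mul_le_mul_of_nonneg_left (abs_le_sqrt (le_add_of_nonneg_left zero_le_one))
            (sqrt_nonneg _)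
      _ = √(t ^ k * (1 + ξ ^ 2)) := (sqrt_mul (rpow_nonneg ht.le k) _).symm
      _ ≤ √(1 + t ^ k * (1 + ξ ^ 2)) := sqrt_le_sqrt (by linarith)
  have hsplit : t ^ (k / 2 - 1) * |ξ| / √(1 + t ^ k * (1 + ξ ^ 2))
      = t⁻¹ * (t ^ (k / 2) * |ξ| / √(1 + t ^ k * (1 + ξ ^ 2))) := by
    rw [rpow_sub ht, rpow_one]; ring
  rw [hsplit]
  exact mul_le_of_le_one_right (inv_nonneg.mpr ht.le) (div_le_one_of_le₀ hnum (sqrt_nonneg _))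

end Integrand

section Integrals

variable {k a : ℝ}

lemma integral_rpow_half_sub_one_up_to_rpow (hk : 0 < k) (ha : 0 < a) :
    ∫ t in (0 : ℝ)..a ^ (-2 / k), t ^ (k / 2 - 1) = 2 / k * a⁻¹ := by
  have hexp : k / 2 - 1 + 1 = k / 2 := by ring
  rw [integral_rpow (Or.inl (by linarith)), hexp, zero_rpow (by positivity), ← rpow_mul ha.le,
    show -2 / k * (k / 2) = -1 by field_simp, rpow_neg_one, sub_zero]
  field_simp

lemma integral_inv_from_rpow (ha : 0 < a) :
    ∫ t in a ^ (-2 / k)..1, t⁻¹ = 2 / k * log a := by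
  rw [integral_inv_of_pos (rpow_pos_of_pos ha _) one_pos, one_div, log_inv, log_rpow ha]
  ring

end Integrals

lemma continuousOn_rpow_mul_abs_div_sqrt {k : ℝ} (hk : 2 ≤ k) (ξ : ℝ) :
    ContinuousOn (fun t : ℝ => t ^ (k / 2 - 1) * |ξ| / √(1 + t ^ k * (1 + ξ ^ 2))) (Icc 0 1) := by
  refine ContinuousOn.div (Continuous.continuousOn ?_) (Continuous.continuousOn ?_) ?_
  · exact (continuous_rpow_const (by linarith)).mul continuous_const
  · exact continuous_sqrt.comp (continuous_const.add
      ((continuous_rpow_const (by linarith)).mul continuous_const))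
  · intro t ht
    exact (sqrt_pos.mpr (by nlinarith [rpow_nonneg ht.1 k, sq_nonneg ξ])).ne'

theorem integral_rpow_mul_abs_div_sqrt_le {k : ℝ} (hk : 2 ≤ k) (ξ : ℝ) :
    ∫ t in (0 : ℝ)..1, t ^ (k / 2 - 1) * |ξ| / √(1 + t ^ k * (1 + ξ ^ 2))
      ≤ 2 / k * (1 + log √(1 + ξ ^ 2)) := by
  set a := √(1 + ξ ^ 2)
  set f := fun t : ℝ => t ^ (k / 2 - 1) * |ξ| / √(1 + t ^ k * (1 + ξ ^ 2))
  have hk0 : 0 < k := by linarith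
  have ha : 1 ≤ a := one_le_sqrt_one_add_sq ξ
  set t₀ := a ^ (-2 / k)
  have ht₀ : 0 < t₀ := rpow_pos_of_pos (by linarith) _
  have ht₀_le : t₀ ≤ 1 := rpow_le_one_of_one_le_of_nonpos ha (by
    apply div_nonpos_of_nonpos_of_nonneg <;> linarith)
  have hf : IntervalIntegrable f volume 0 1 :=
    (continuousOn_rpow_mul_abs_div_sqrt hk ξ).intervalIntegrable_of_Icc zero_le_one
  have hf₁ : IntervalIntegrable f volume 0 t₀ :=
    hf.mono_set <| by
      rw [uIcc_of_le zero_le_one, uIcc_of_le ht₀.le]; exact Icc_subset_Icc le_rfl ht₀_le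
  have hf₂ : IntervalIntegrable f volume t₀ 1 :=
    hf.mono_set <| by
      rw [uIcc_of_le zero_le_one, uIcc_of_le ht₀_le]; exact Icc_subset_Icc ht₀.le le_rfl
  have h_small : ∫ t in (0 : ℝ)..t₀, f t ≤ 2 / k := by
    calc ∫ t in (0 : ℝ)..t₀, f t ≤ ∫ t in (0 : ℝ)..t₀, t ^ (k / 2 - 1) * a :=
          integral_mono_on ht₀.le hf₁
            (((continuous_rpow_const (by linarith)).mul continuous_const).intervalIntegrable _ _)
            fun t ht => rpow_mul_abs_div_sqrt_le _ ξ ht.1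
      _ = 2 / k := by
          rw [intervalIntegral.integral_mul_const,
            integral_rpow_half_sub_one_up_to_rpow hk0 (by linarith)]
          field_simp
  have h_large : ∫ t in t₀..1, f t ≤ 2 / k * log a := by
    calc ∫ t in t₀..1, f t ≤ ∫ t in t₀..1, t⁻¹ :=
          integral_mono_on ht₀_le hf₂
            (intervalIntegrable_inv (fun t ht => by
              rw [uIcc_of_le ht₀_le] at ht; exact (ht₀.trans_le ht.1).ne') continuousOn_id)
            fun t ht => rpow_half_sub_one_mul_abs_div_sqrt_le_inv ξ (ht₀.trans_le ht.1)
      _ = 2 / k * log a := integral_inv_from_rpow (by linarith)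
  rw [← integral_add_adjacent_intervals hf₁ hf₂]
  linarith

lemma one_add_log_le_mul_log_one_add {a : ℝ} (ha : 1 ≤ a) :
    1 + log a ≤ (1 / log 2 + 1) * log (1 + a) := by
  have hlog2 : 0 < log 2 := log_pos one_lt_two
  have h2 : log 2 ≤ log (1 + a) := log_le_log two_pos (by linarith)
  have ha' : log a ≤ log (1 + a) := log_le_log (by linarith) (by linarith)
  have h1 : 1 ≤ log (1 + a) / log 2 := (one_le_div hlog2).mpr h2
  rw [add_mul, one_mul, one_div, inv_mul_eq_div]
  linarith

/-- Lemma 4.3 (case l = 0): for k ≥ 2 and ρ = 1/2 − 1/k there is a constant C with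
∫₀¹ t^{kρ}|ξ| / √(1 + t^k ⟨ξ⟩²) dt ≤ C·log(1 + ⟨ξ⟩), where ⟨ξ⟩ = √(1+ξ²). -/
theorem stmt_4 (k : ℕ) (hk : 2 ≤ k) (ρ : ℝ) (hρ : ρ = 1 / 2 - 1 / (k : ℝ)) :
    ∃ C : ℝ, ∀ ξ : ℝ,
      ∫ t in (0:ℝ)..1, t ^ ((k : ℝ) * ρ) * |ξ| / Real.sqrt (1 + t ^ (k : ℝ) * (1 + ξ ^ 2))
        ≤ C * Real.log (1 + Real.sqrt (1 + ξ ^ 2)) := by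
  have hk' : (2 : ℝ) ≤ k := by exact_mod_cast hk
  have hkρ : (k : ℝ) * ρ = k / 2 - 1 := by
    rw [hρ]; field_simp
  refine ⟨1 / log 2 + 1, fun ξ => ?_⟩
  have hlog : 0 ≤ log √(1 + ξ ^ 2) := log_nonneg (one_le_sqrt_one_add_sq ξ)
  have h2k : 2 / (k : ℝ) ≤ 1 := (div_le_one (by linarith)).mpr hk'
  rw [hkρ]
  calc _ ≤ 2 / k * (1 + log √(1 + ξ ^ 2)) := integral_rpow_mul_abs_div_sqrt_le hk' ξ
    _ ≤ 1 + log √(1 + ξ ^ 2) := mul_le_of_le_one_left (by positivity) h2k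
    _ ≤ _ := one_add_log_le_mul_log_one_add (one_le_sqrt_one_add_sq ξ)
end
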